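/- arXiv:2603.19545 — 8 statements merged into one kernel-verified Lean document; each statement's English description precedes it below -/
import Mathlib

section
/- Let φ(t,x) be the flow of ẋ = f(x) on a forward-invariant set Ω with φ(t,x) → 0 as t → ∞ for all x ∈ Ω. Let ω: ℝⁿ → ℝ≥0 be continuous with V(x) := ∫₀^∞ ω(φ(t,x)) dt finite for all x ∈ Ω. If V̂ ∈ C¹(Ω) satisfies V̂(0) = 0 and the residual r(x) := DV̂(x)·f(x) + ω(x) satisfies |r(x)| ≤ ε·ω(x) for all x ∈ Ω with ε ∈ [0,1), then |V̂(x) − V(x)| ≤ ε·V(x) for all x ∈ Ω. -/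
open MeasureTheory Filter Topology

/-- Relative error bound for approximate solutions of the Lyapunov PDE:
if the residual satisfies `|r x| ≤ ε * ω x` on a forward-invariant `Ω` from which
the flow converges to the origin, then `|V̂ x - V x| ≤ ε * V x`. -/
theorem lyapunov_relative_error_bound
    {n : ℕ}
    (f : EuclideanSpace ℝ (Fin n) → EuclideanSpace ℝ (Fin n))
    (φ : ℝ → EuclideanSpace ℝ (Fin n) → EuclideanSpace ℝ (Fin n))
    (Ω : Set (EuclideanSpace ℝ (Fin n)))
    (ω : EuclideanSpace ℝ (Fin n) → ℝ)
    (Vhat : EuclideanSpace ℝ (Fin n) → ℝ)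
    (DVhat : EuclideanSpace ℝ (Fin n) → EuclideanSpace ℝ (Fin n) →L[ℝ] ℝ)
    (ε : ℝ) (hε0 : 0 ≤ ε) (hε1 : ε < 1)
    (h0Ω : (0 : EuclideanSpace ℝ (Fin n)) ∈ Ω)
    (hφ0 : ∀ x ∈ Ω, φ 0 x = x)
    (hinv : ∀ x ∈ Ω, ∀ t : ℝ, 0 ≤ t → φ t x ∈ Ω)
    (hflow : ∀ x ∈ Ω, ∀ t : ℝ, 0 ≤ t → HasDerivAt (fun s => φ s x) (f (φ t x)) t)
    (hlim : ∀ x ∈ Ω, Tendsto (fun t => φ t x) atTop (𝓝 0))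
    (hωcont : Continuous ω)
    (hωnn : ∀ x, 0 ≤ ω x)
    (hint : ∀ x ∈ Ω, IntegrableOn (fun t => ω (φ t x)) (Set.Ioi (0:ℝ)))
    (V : EuclideanSpace ℝ (Fin n) → ℝ)
    (hV : ∀ x, V x = ∫ t in Set.Ioi (0:ℝ), ω (φ t x))
    (hC1 : ∀ x ∈ Ω, HasFDerivAt Vhat (DVhat x) x)
    (hDVcont : ContinuousOn DVhat Ω)
    (hVhat0 : Vhat 0 = 0)
    (hres : ∀ x ∈ Ω, |DVhat x (f x) + ω x| ≤ ε * ω x) :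
    ∀ x ∈ Ω, |Vhat x - V x| ≤ ε * V x := by
  intro x hx
  set ψ : ℝ → EuclideanSpace ℝ (Fin n) := fun t => φ t x with hψ
  set g : ℝ → ℝ := fun t => Vhat (ψ t) with hgdef
  set g' : ℝ → ℝ := fun t => DVhat (ψ t) (f (ψ t)) with hg'def
  have hmemΩ : ∀ t : ℝ, 0 ≤ t → ψ t ∈ Ω := fun t ht => hinv x hx t ht
  have hg : ∀ t : ℝ, 0 ≤ t → HasDerivAt g (g' t) t := fun t ht =>
    (hC1 _ (hmemΩ t ht)).comp_hasDerivAt t (hflow x hx t ht)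
  have hres' : ∀ t : ℝ, 0 ≤ t → |g' t + ω (ψ t)| ≤ ε * ω (ψ t) := fun t ht =>
    hres _ (hmemΩ t ht)
  have hbound : ∀ t : ℝ, 0 ≤ t → |g' t| ≤ (1 + ε) * ω (ψ t) := by
    intro t ht
    have h1 := hres' t ht
    have h2 : |g' t| ≤ |g' t + ω (ψ t)| + |ω (ψ t)| := by
      calc |g' t| = |(g' t + ω (ψ t)) + (-(ω (ψ t)))| := by ring_nf
        _ ≤ |g' t + ω (ψ t)| + |(-(ω (ψ t)))| := abs_add_le _ _
        _ = |g' t + ω (ψ t)| + |ω (ψ t)| := by rw [abs_neg]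
    have h3 : |ω (ψ t)| = ω (ψ t) := abs_of_nonneg (hωnn _)
    nlinarith [hωnn (ψ t)]
  have hωψ : IntegrableOn (fun t => ω (ψ t)) (Set.Ioi (0:ℝ)) := hint x hx
  have hmeas : AEStronglyMeasurable g' (volume.restrict (Set.Ioi (0:ℝ))) := by
    have hderiv : ∀ t ∈ Set.Ioi (0:ℝ), deriv g t = g' t := fun t ht =>
      (hg t (le_of_lt ht)).deriv
    refine (measurable_deriv g).aestronglyMeasurable.congr ?_
    filter_upwards [ae_restrict_mem measurableSet_Ioi] with t ht
    exact hderiv t ht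
  have hg'int : IntegrableOn g' (Set.Ioi (0:ℝ)) := by
    refine Integrable.mono (hωψ.const_mul (1 + ε)) hmeas ?_
    filter_upwards [ae_restrict_mem measurableSet_Ioi] with t ht
    have := hbound t (le_of_lt ht)
    have hω := hωnn (ψ t)
    simp only [Real.norm_eq_abs]
    calc |g' t| ≤ (1 + ε) * ω (ψ t) := this
      _ ≤ |(1 + ε) * ω (ψ t)| := le_abs_self _
  -- FTC on [0, T]
  have hFTC : ∀ T : ℝ, 0 ≤ T → (∫ t in (0:ℝ)..T, g' t) = g T - g 0 := by
    intro T hT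
    apply intervalIntegral.integral_eq_sub_of_hasDerivAt
    · intro t ht
      rw [Set.uIcc_of_le hT] at ht
      exact hg t ht.1
    · rw [intervalIntegrable_iff_integrableOn_Ioc_of_le hT]
      exact hg'int.mono_set Set.Ioc_subset_Ioi_self
  -- limits
  have hglim : Tendsto g atTop (𝓝 0) := by
    have hc : ContinuousAt Vhat 0 := (hC1 0 h0Ω).continuousAt
    have := hc.tendsto.comp (hlim x hx)
    rwa [hVhat0] at this
  have hIlim : Tendsto (fun T => ∫ t in (0:ℝ)..T, g' t) atTop
      (𝓝 (∫ t in Set.Ioi (0:ℝ), g' t)) :=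
    intervalIntegral_tendsto_integral_Ioi 0 hg'int tendsto_id
  have hIlim2 : Tendsto (fun T => ∫ t in (0:ℝ)..T, g' t) atTop (𝓝 (0 - g 0)) := by
    have : Tendsto (fun T => g T - g 0) atTop (𝓝 (0 - g 0)) :=
      hglim.sub tendsto_const_nhds
    refine this.congr' ?_
    filter_upwards [eventually_ge_atTop (0:ℝ)] with T hT
    exact (hFTC T hT).symm
  have hkey : (∫ t in Set.Ioi (0:ℝ), g' t) = -g 0 := by
    have := tendsto_nhds_unique hIlim hIlim2
    linarith [this]
  have hg0 : g 0 = Vhat x := by simp only [hgdef, hψ, hφ0 x hx]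
  -- combine
  have hVx : V x = ∫ t in Set.Ioi (0:ℝ), ω (ψ t) := hV x
  have hsum : Vhat x - V x = -∫ t in Set.Ioi (0:ℝ), (g' t + ω (ψ t)) := by
    rw [integral_add hg'int hωψ, hkey, hg0, hVx]
    ring
  have habs : |Vhat x - V x| ≤ ∫ t in Set.Ioi (0:ℝ), |g' t + ω (ψ t)| := by
    rw [hsum, abs_neg]
    have := norm_integral_le_integral_norm (μ := volume.restrict (Set.Ioi (0:ℝ)))
      (f := fun t => g' t + ω (ψ t))
    simpa [Real.norm_eq_abs] using this
  have hmono : (∫ t in Set.Ioi (0:ℝ), |g' t + ω (ψ t)|) ≤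
      ∫ t in Set.Ioi (0:ℝ), ε * ω (ψ t) := by
    apply integral_mono_ae ((hg'int.add hωψ).abs) (hωψ.const_mul ε)
    filter_upwards [ae_restrict_mem measurableSet_Ioi] with t ht
    exact hres' t (le_of_lt ht)
  calc |Vhat x - V x| ≤ ∫ t in Set.Ioi (0:ℝ), ε * ω (ψ t) := le_trans habs hmono
    _ = ε * ∫ t in Set.Ioi (0:ℝ), ω (ψ t) := MeasureTheory.integral_const_mul ε _
    _ = ε * V x := by rw [hVx]
end

section
/- Under the same hypotheses as the relative error bound for the Lyapunov PDE (residual |r(x)| ≤ ε·ω(x) on Ω with ε ∈ [0,1), V̂(0) = 0), the a posteriori bound |V̂(x) − V(x)| ≤ (ε/(1−ε))·V̂(x) holds for all x ∈ Ω. -/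
open MeasureTheory Filter Topology

/-- Relative error bound for approximate solutions of the Lyapunov PDE:
if the residual satisfies `|r x| ≤ ε * ω x` on a forward-invariant `Ω` from which
the flow converges to the origin, then `|V̂ x - V x| ≤ ε * V x`. -/
theorem lyapunov_aposteriori_error_bound
    {n : ℕ}
    (f : EuclideanSpace ℝ (Fin n) → EuclideanSpace ℝ (Fin n))
    (φ : ℝ → EuclideanSpace ℝ (Fin n) → EuclideanSpace ℝ (Fin n))
    (Ω : Set (EuclideanSpace ℝ (Fin n)))
    (ω : EuclideanSpace ℝ (Fin n) → ℝ)
    (Vhat : EuclideanSpace ℝ (Fin n) → ℝ)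
    (DVhat : EuclideanSpace ℝ (Fin n) → EuclideanSpace ℝ (Fin n) →L[ℝ] ℝ)
    (ε : ℝ) (hε0 : 0 ≤ ε) (hε1 : ε < 1)
    (h0Ω : (0 : EuclideanSpace ℝ (Fin n)) ∈ Ω)
    (hφ0 : ∀ x ∈ Ω, φ 0 x = x)
    (hinv : ∀ x ∈ Ω, ∀ t : ℝ, 0 ≤ t → φ t x ∈ Ω)
    (hflow : ∀ x ∈ Ω, ∀ t : ℝ, 0 ≤ t → HasDerivAt (fun s => φ s x) (f (φ t x)) t)
    (hlim : ∀ x ∈ Ω, Tendsto (fun t => φ t x) atTop (𝓝 0))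
    (hωcont : Continuous ω)
    (hωnn : ∀ x, 0 ≤ ω x)
    (hint : ∀ x ∈ Ω, IntegrableOn (fun t => ω (φ t x)) (Set.Ioi (0:ℝ)))
    (V : EuclideanSpace ℝ (Fin n) → ℝ)
    (hV : ∀ x, V x = ∫ t in Set.Ioi (0:ℝ), ω (φ t x))
    (hC1 : ∀ x ∈ Ω, HasFDerivAt Vhat (DVhat x) x)
    (hDVcont : ContinuousOn DVhat Ω)
    (hVhat0 : Vhat 0 = 0)
    (hres : ∀ x ∈ Ω, |DVhat x (f x) + ω x| ≤ ε * ω x) :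
    ∀ x ∈ Ω, |Vhat x - V x| ≤ ε / (1 - ε) * Vhat x := by
  intro x hx
  have hφcont : ContinuousOn (fun t => φ t x) (Set.Ici (0:ℝ)) := fun t ht =>
    ((hflow x hx t ht).continuousAt).continuousWithinAt
  set w : ℝ → ℝ := fun t => ω (φ t x) with hw
  set ρ : ℝ → ℝ := fun t => DVhat (φ t x) (f (φ t x)) + ω (φ t x) with hρ
  set g : ℝ → ℝ := fun t => Vhat (φ t x) with hg
  have hderiv : ∀ t : ℝ, 0 ≤ t → HasDerivAt g (ρ t - w t) t := by
    intro t ht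
    have h1 := (hC1 (φ t x) (hinv x hx t ht)).comp_hasDerivAt t (hflow x hx t ht)
    have h2 : ρ t - w t = DVhat (φ t x) (f (φ t x)) := by simp [hρ, hw]
    rw [h2]; exact h1
  have hwcont : ContinuousOn w (Set.Ici (0:ℝ)) := hωcont.comp_continuousOn hφcont
  have hwint : IntegrableOn w (Set.Ioi (0:ℝ)) := hint x hx
  have hρbound : ∀ t : ℝ, 0 ≤ t → |ρ t| ≤ ε * w t := by
    intro t ht
    exact hres (φ t x) (hinv x hx t ht)
  have hρmeas : AEStronglyMeasurable ρ (volume.restrict (Set.Ioi (0:ℝ))) := by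
    have h1 : AEStronglyMeasurable (fun t => deriv g t + w t)
        (volume.restrict (Set.Ioi (0:ℝ))) :=
      ((measurable_deriv g).aestronglyMeasurable).add
        ((hwcont.mono Set.Ioi_subset_Ici_self).aestronglyMeasurable measurableSet_Ioi)
    refine h1.congr ?_
    filter_upwards [ae_restrict_mem measurableSet_Ioi] with t ht
    have := (hderiv t ht.le).deriv
    simp only [this]; ring
  have hρint : IntegrableOn ρ (Set.Ioi (0:ℝ)) := by
    refine Integrable.mono' (hwint.const_mul ε) hρmeas ?_
    filter_upwards [ae_restrict_mem measurableSet_Ioi] with t ht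
    simpa [Real.norm_eq_abs] using hρbound t ht.le
  have key : ∀ T : ℝ, 0 ≤ T →
      g T - Vhat x = (∫ t in (0:ℝ)..T, ρ t) - ∫ t in (0:ℝ)..T, w t := by
    intro T hT
    have hiiρ : IntervalIntegrable ρ volume 0 T :=
      (intervalIntegrable_iff_integrableOn_Ioc_of_le hT).2
        (hρint.mono_set Set.Ioc_subset_Ioi_self)
    have hiiw : IntervalIntegrable w volume 0 T :=
      (intervalIntegrable_iff_integrableOn_Ioc_of_le hT).2
        (hwint.mono_set Set.Ioc_subset_Ioi_self)
    have hftc := intervalIntegral.integral_eq_sub_of_hasDerivAt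
      (f := g) (f' := fun t => ρ t - w t)
      (fun t ht => hderiv t (by
        rw [Set.uIcc_of_le hT] at ht; exact ht.1)) (hiiρ.sub hiiw)
    rw [intervalIntegral.integral_sub hiiρ hiiw] at hftc
    have hg0 : g 0 = Vhat x := by simp [hg, hφ0 x hx]
    rw [hftc, hg0]
  have hlimg : Tendsto (fun T => g T - Vhat x) atTop (𝓝 (0 - Vhat x)) := by
    have hc : Tendsto g atTop (𝓝 (Vhat 0)) :=
      ((hC1 0 h0Ω).continuousAt.tendsto).comp (hlim x hx)
    rw [hVhat0] at hc
    exact hc.sub_const _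
  have hlimρ : Tendsto (fun T => ∫ t in (0:ℝ)..T, ρ t) atTop
      (𝓝 (∫ t in Set.Ioi (0:ℝ), ρ t)) :=
    MeasureTheory.intervalIntegral_tendsto_integral_Ioi 0 hρint tendsto_id
  have hlimw : Tendsto (fun T => ∫ t in (0:ℝ)..T, w t) atTop
      (𝓝 (V x)) := by
    rw [hV x]
    exact MeasureTheory.intervalIntegral_tendsto_integral_Ioi 0 hwint tendsto_id
  have hlim2 : Tendsto (fun T => g T - Vhat x) atTop
      (𝓝 ((∫ t in Set.Ioi (0:ℝ), ρ t) - V x)) := by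
    refine (hlimρ.sub hlimw).congr' ?_
    filter_upwards [eventually_ge_atTop (0:ℝ)] with T hT
    exact (key T hT).symm
  have heq : 0 - Vhat x = (∫ t in Set.Ioi (0:ℝ), ρ t) - V x :=
    tendsto_nhds_unique hlimg hlim2
  have habs : |Vhat x - V x| ≤ ε * V x := by
    have h1 : Vhat x - V x = -(∫ t in Set.Ioi (0:ℝ), ρ t) := by linarith
    have h2 : |∫ t in Set.Ioi (0:ℝ), ρ t| ≤ ∫ t in Set.Ioi (0:ℝ), ε * w t := by
      rw [← Real.norm_eq_abs]
      refine (norm_integral_le_integral_norm ρ).trans ?_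
      refine integral_mono_ae hρint.norm (hwint.const_mul ε) ?_
      filter_upwards [ae_restrict_mem measurableSet_Ioi] with t ht
      simpa [Real.norm_eq_abs] using hρbound t ht.le
    have h3 : (∫ t in Set.Ioi (0:ℝ), ε * w t) = ε * V x := by
      rw [hV x, MeasureTheory.integral_const_mul]
    rw [h1, abs_neg]
    linarith
  have hVnn : 0 ≤ V x := by
    rw [hV x]
    exact setIntegral_nonneg measurableSet_Ioi fun t _ => hωnn _
  have h1ε : 0 < 1 - ε := by linarith
  have hVhatge : (1 - ε) * V x ≤ Vhat x := by
    have := abs_le.1 habs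
    nlinarith [this.1, this.2]
  have hfin : ε * V x ≤ ε / (1 - ε) * Vhat x := by
    rw [div_mul_eq_mul_div, le_div_iff₀ h1ε]
    nlinarith
  linarith [abs_le.1 habs, habs]
end

section
/- Let V̂ ∈ C¹(Ω) with V̂(0)=0 and let φ(t,x) be the flow of ẋ = f(x) on a forward-invariant Ω with φ(t,x) → 0 and V̂(φ(T,x)) → 0 as T → ∞. If V(x) := ∫₀^∞ ω(φ(t,x)) dt converges and r(x) := DV̂(x)·f(x) + ω(x) is integrable along trajectories, then V(x) − V̂(x) = ∫₀^∞ r(φ(t,x)) dt for all x ∈ Ω (the error representation identity). -/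
open MeasureTheory Filter Topology

/-! Along a trajectory, `t ↦ V̂ (φ t x)` has derivative `DV̂ (φ t x) (f (φ t x))` by the chain rule,
so the fundamental theorem of calculus on `[0, ∞)` together with `V̂ (φ T x) → 0` gives
`∫₀^∞ DV̂ (φ t x) (f (φ t x)) dt = -V̂ x`. Adding `∫₀^∞ ω (φ t x) dt = V x` yields the identity. -/

theorem integral_Ioi_fderiv_apply_deriv_eq_sub {E : Type*} [NormedAddCommGroup E]
    [NormedSpace ℝ E] {γ γ' : ℝ → E} {V : E → ℝ} {DV : E → E →L[ℝ] ℝ} {a m : ℝ}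
    (hγ : ∀ t ∈ Set.Ici a, HasDerivAt γ (γ' t) t)
    (hV : ∀ t ∈ Set.Ici a, HasFDerivAt V (DV (γ t)) (γ t))
    (hint : IntegrableOn (fun t => DV (γ t) (γ' t)) (Set.Ioi a))
    (hlim : Tendsto (fun t => V (γ t)) atTop (𝓝 m)) :
    ∫ t in Set.Ioi a, DV (γ t) (γ' t) = m - V (γ a) :=
  integral_Ioi_of_hasDerivAt_of_tendsto'
    (fun t ht => (hV t ht).comp_hasDerivAt t (hγ t ht)) hint hlim

theorem lyapunov_error_representation_general
    {n : ℕ}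
    (f : EuclideanSpace ℝ (Fin n) → EuclideanSpace ℝ (Fin n))
    (φ : ℝ → EuclideanSpace ℝ (Fin n) → EuclideanSpace ℝ (Fin n))
    (Ω : Set (EuclideanSpace ℝ (Fin n)))
    (ω : EuclideanSpace ℝ (Fin n) → ℝ)
    (Vhat : EuclideanSpace ℝ (Fin n) → ℝ)
    (DVhat : EuclideanSpace ℝ (Fin n) → EuclideanSpace ℝ (Fin n) →L[ℝ] ℝ)
    (hφ0 : ∀ x ∈ Ω, φ 0 x = x)
    (hinv : ∀ x ∈ Ω, ∀ t : ℝ, 0 ≤ t → φ t x ∈ Ω)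
    (hflow : ∀ x ∈ Ω, ∀ t : ℝ, 0 ≤ t → HasDerivAt (fun s => φ s x) (f (φ t x)) t)
    (hint : ∀ x ∈ Ω, IntegrableOn (fun t => ω (φ t x)) (Set.Ioi (0:ℝ)))
    (V : EuclideanSpace ℝ (Fin n) → ℝ)
    (hV : ∀ x, V x = ∫ t in Set.Ioi (0:ℝ), ω (φ t x))
    (hC1 : ∀ x ∈ Ω, HasFDerivAt Vhat (DVhat x) x)
    (hVhatlim : ∀ x ∈ Ω, Tendsto (fun T => Vhat (φ T x)) atTop (𝓝 0))
    (hrint : ∀ x ∈ Ω,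
      IntegrableOn (fun t => DVhat (φ t x) (f (φ t x)) + ω (φ t x)) (Set.Ioi (0:ℝ))) :
    ∀ x ∈ Ω, V x - Vhat x =
      ∫ t in Set.Ioi (0:ℝ), (DVhat (φ t x) (f (φ t x)) + ω (φ t x)) := by
  intro x hx
  have hderiv_int : IntegrableOn (fun t => DVhat (φ t x) (f (φ t x))) (Set.Ioi 0) := by
    simpa [Pi.sub_def] using (hrint x hx).sub (hint x hx)
  have hderiv_integral : ∫ t in Set.Ioi (0:ℝ), DVhat (φ t x) (f (φ t x)) = -Vhat x := by
    rw [integral_Ioi_fderiv_apply_deriv_eq_sub (fun t ht => hflow x hx t ht)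
      (fun t ht => hC1 _ (hinv x hx t ht)) hderiv_int (hVhatlim x hx), hφ0 x hx, zero_sub]
  rw [integral_add hderiv_int (hint x hx), hderiv_integral, hV x]
  ring

/-- Error representation identity for the Lyapunov PDE:
`V x - V̂ x = ∫₀^∞ r (φ t x) dt` where `r x = DV̂ x (f x) + ω x`. -/
theorem lyapunov_error_representation
    {n : ℕ}
    (f : EuclideanSpace ℝ (Fin n) → EuclideanSpace ℝ (Fin n))
    (φ : ℝ → EuclideanSpace ℝ (Fin n) → EuclideanSpace ℝ (Fin n))
    (Ω : Set (EuclideanSpace ℝ (Fin n)))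
    (ω : EuclideanSpace ℝ (Fin n) → ℝ)
    (Vhat : EuclideanSpace ℝ (Fin n) → ℝ)
    (DVhat : EuclideanSpace ℝ (Fin n) → EuclideanSpace ℝ (Fin n) →L[ℝ] ℝ)
    (h0Ω : (0 : EuclideanSpace ℝ (Fin n)) ∈ Ω)
    (hφ0 : ∀ x ∈ Ω, φ 0 x = x)
    (hinv : ∀ x ∈ Ω, ∀ t : ℝ, 0 ≤ t → φ t x ∈ Ω)
    (hflow : ∀ x ∈ Ω, ∀ t : ℝ, 0 ≤ t → HasDerivAt (fun s => φ s x) (f (φ t x)) t)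
    (hlim : ∀ x ∈ Ω, Tendsto (fun t => φ t x) atTop (𝓝 0))
    (hωcont : Continuous ω)
    (hωnn : ∀ x, 0 ≤ ω x)
    (hint : ∀ x ∈ Ω, IntegrableOn (fun t => ω (φ t x)) (Set.Ioi (0:ℝ)))
    (V : EuclideanSpace ℝ (Fin n) → ℝ)
    (hV : ∀ x, V x = ∫ t in Set.Ioi (0:ℝ), ω (φ t x))
    (hC1 : ∀ x ∈ Ω, HasFDerivAt Vhat (DVhat x) x)
    (hDVcont : ContinuousOn DVhat Ω)
    (hVhat0 : Vhat 0 = 0)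
    (hVhatlim : ∀ x ∈ Ω, Tendsto (fun T => Vhat (φ T x)) atTop (𝓝 0))
    (hrint : ∀ x ∈ Ω,
      IntegrableOn (fun t => DVhat (φ t x) (f (φ t x)) + ω (φ t x)) (Set.Ioi (0:ℝ))) :
    ∀ x ∈ Ω, V x - Vhat x =
      ∫ t in Set.Ioi (0:ℝ), (DVhat (φ t x) (f (φ t x)) + ω (φ t x)) :=
  lyapunov_error_representation_general f φ Ω ω Vhat DVhat hφ0 hinv hflow hint V hV hC1 hVhatlim
    hrint
end

section
/- If in addition to the hypotheses of the Lyapunov error theorem the one-sided residual bound r(x) ≤ ε·ω(x) holds on Ω for ε ∈ [0,1) and ω is positive definite, then V̂(x) ≥ (1−ε)·V(x) on Ω and DV̂(x)·f(x) ≤ −(1−ε)·ω(x) on Ω; in particular V̂ is positive definite, hence a Lyapunov function for ẋ = f(x) on Ω. -/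
open MeasureTheory Filter Topology

/-!
Along a trajectory, `t ↦ V̂(φ t x)` has derivative `DV̂·f ≤ -(1-ε) ω`, so on `[0, T]` it drops by
at least `(1-ε) ∫₀ᵀ ω(φ s x) ds`; letting `T → ∞`, `V̂(φ T x) → V̂ 0 = 0` and the integral tends to
`V x`, which gives `V̂ ≥ (1-ε) V`. For `x ≠ 0` the integrand `ω(φ t x)` is continuous, nonnegative
and positive at `t = 0`, so `V x > 0`, and `ε < 1` makes `V̂ x` positive.
-/

section

open Set

theorem integral_Ioi_le_sub_of_hasDerivAt_of_le_neg {g g' ψ : ℝ → ℝ} {a m : ℝ}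
    (hderiv : ∀ t ∈ Ici a, HasDerivAt g (g' t) t) (hψ : IntegrableOn ψ (Ioi a))
    (hle : ∀ t ∈ Ioi a, ψ t ≤ -g' t) (hlim : Tendsto g atTop (𝓝 m)) :
    ∫ t in Ioi a, ψ t ≤ g a - m := by
  have hfinite : ∀ T ∈ Ici a, ∫ t in a..T, ψ t ≤ g a - g T := fun T hT => by
    have hsub : Icc a T ⊆ Ici a := Icc_subset_Ici_self
    have := intervalIntegral.integral_le_sub_of_hasDeriv_right_of_le hT
      (fun t ht => (hderiv t (hsub ht)).continuousAt.neg.continuousWithinAt)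
      (fun t ht => (hderiv t (hsub (Ioo_subset_Icc_self ht))).neg.hasDerivWithinAt)
      (((integrableOn_Ici_iff_integrableOn_Ioi (by simp)).2 hψ).mono_set hsub)
      (fun t ht => hle t ht.1)
    simp only [Pi.neg_apply] at this; linarith
  exact le_of_tendsto_of_tendsto (intervalIntegral_tendsto_integral_Ioi a hψ tendsto_id)
    (tendsto_const_nhds.sub hlim) (eventually_atTop.2 ⟨a, hfinite⟩)

theorem integral_Ioi_pos_of_continuousOn {ψ : ℝ → ℝ} {a : ℝ} (hcont : ContinuousOn ψ (Ici a))
    (hnonneg : ∀ t ∈ Ioi a, 0 ≤ ψ t) (hψ : IntegrableOn ψ (Ioi a)) (hpos : 0 < ψ a) :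
    0 < ∫ t in Ioi a, ψ t := by
  have hunit : 0 < ∫ t in a..a + 1, ψ t :=
    intervalIntegral.integral_pos (lt_add_one a) (hcont.mono Icc_subset_Ici_self)
      (fun t ht => hnonneg t ht.1) ⟨a, left_mem_Icc.2 (lt_add_one a).le, hpos⟩
  calc 0 < ∫ t in Ioc a (a + 1), ψ t := by rwa [← intervalIntegral.integral_of_le (lt_add_one a).le]
    _ ≤ ∫ t in Ioi a, ψ t :=
      setIntegral_mono_set hψ ((ae_restrict_iff' measurableSet_Ioi).2 (ae_of_all _ hnonneg))
        Ioc_subset_Ioi_self.eventuallyLE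

end

theorem lyapunov_onesided_certificate_general
    {n : ℕ}
    (f : EuclideanSpace ℝ (Fin n) → EuclideanSpace ℝ (Fin n))
    (φ : ℝ → EuclideanSpace ℝ (Fin n) → EuclideanSpace ℝ (Fin n))
    (Ω : Set (EuclideanSpace ℝ (Fin n)))
    (ω : EuclideanSpace ℝ (Fin n) → ℝ)
    (Vhat : EuclideanSpace ℝ (Fin n) → ℝ)
    (DVhat : EuclideanSpace ℝ (Fin n) → EuclideanSpace ℝ (Fin n) →L[ℝ] ℝ)
    (ε : ℝ) (hε1 : ε < 1)
    (h0Ω : (0 : EuclideanSpace ℝ (Fin n)) ∈ Ω)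
    (hφ0 : ∀ x ∈ Ω, φ 0 x = x)
    (hinv : ∀ x ∈ Ω, ∀ t : ℝ, 0 ≤ t → φ t x ∈ Ω)
    (hflow : ∀ x ∈ Ω, ∀ t : ℝ, 0 ≤ t → HasDerivAt (fun s => φ s x) (f (φ t x)) t)
    (hlim : ∀ x ∈ Ω, Tendsto (fun t => φ t x) atTop (𝓝 0))
    (hωcont : Continuous ω)
    (hωnn : ∀ x, 0 ≤ ω x)
    (hωpos : ∀ x, x ≠ 0 → 0 < ω x)
    (hint : ∀ x ∈ Ω, IntegrableOn (fun t => ω (φ t x)) (Set.Ioi (0:ℝ)))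
    (V : EuclideanSpace ℝ (Fin n) → ℝ)
    (hV : ∀ x, V x = ∫ t in Set.Ioi (0:ℝ), ω (φ t x))
    (hC1 : ∀ x ∈ Ω, HasFDerivAt Vhat (DVhat x) x)
    (hVhat0 : Vhat 0 = 0)
    (hres : ∀ x ∈ Ω, DVhat x (f x) + ω x ≤ ε * ω x) :
    (∀ x ∈ Ω, (1 - ε) * V x ≤ Vhat x) ∧
    (∀ x ∈ Ω, DVhat x (f x) ≤ -((1 - ε) * ω x)) ∧
    (∀ x ∈ Ω, x ≠ 0 → 0 < Vhat x) := by
  have hdecay : ∀ x ∈ Ω, DVhat x (f x) ≤ -((1 - ε) * ω x) := fun x hx => by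
    linarith [hres x hx]
  have hbound : ∀ x ∈ Ω, (1 - ε) * V x ≤ Vhat x := by
    intro x hx
    have hVhat_flow : ∀ t ∈ Set.Ici (0 : ℝ),
        HasDerivAt (fun s => Vhat (φ s x)) (DVhat (φ t x) (f (φ t x))) t :=
      fun t ht => (hC1 _ (hinv x hx t ht)).comp_hasDerivAt t (hflow x hx t ht)
    have hVhat_lim : Tendsto (fun t => Vhat (φ t x)) atTop (𝓝 0) :=
      hVhat0 ▸ (hC1 0 h0Ω).continuousAt.tendsto.comp (hlim x hx)
    have := integral_Ioi_le_sub_of_hasDerivAt_of_le_neg hVhat_flow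
      ((hint x hx).const_mul (1 - ε))
      (fun t ht => le_neg_of_le_neg (hdecay _ (hinv x hx t ht.le))) hVhat_lim
    rwa [integral_const_mul, ← hV, hφ0 x hx, sub_zero] at this
  refine ⟨hbound, hdecay, fun x hx hx0 => ?_⟩
  have hVpos : 0 < V x := hV x ▸ integral_Ioi_pos_of_continuousOn
    (fun t ht => (hωcont.continuousAt.comp (hflow x hx t ht).continuousAt).continuousWithinAt)
    (fun t _ => hωnn _) (hint x hx) (by rw [hφ0 x hx]; exact hωpos x hx0)
  exact (mul_pos (sub_pos.2 hε1) hVpos).trans_le (hbound x hx)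

/-- One-sided residual bound `r x ≤ ε * ω x` with `ω` positive definite implies
`V̂ ≥ (1-ε)V`, `DV̂·f ≤ -(1-ε)ω`, and `V̂` is positive definite on `Ω`,
hence a Lyapunov function. -/
theorem lyapunov_onesided_certificate
    {n : ℕ}
    (f : EuclideanSpace ℝ (Fin n) → EuclideanSpace ℝ (Fin n))
    (φ : ℝ → EuclideanSpace ℝ (Fin n) → EuclideanSpace ℝ (Fin n))
    (Ω : Set (EuclideanSpace ℝ (Fin n)))
    (ω : EuclideanSpace ℝ (Fin n) → ℝ)
    (Vhat : EuclideanSpace ℝ (Fin n) → ℝ)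
    (DVhat : EuclideanSpace ℝ (Fin n) → EuclideanSpace ℝ (Fin n) →L[ℝ] ℝ)
    (ε : ℝ) (hε0 : 0 ≤ ε) (hε1 : ε < 1)
    (h0Ω : (0 : EuclideanSpace ℝ (Fin n)) ∈ Ω)
    (hφ0 : ∀ x ∈ Ω, φ 0 x = x)
    (hinv : ∀ x ∈ Ω, ∀ t : ℝ, 0 ≤ t → φ t x ∈ Ω)
    (hflow : ∀ x ∈ Ω, ∀ t : ℝ, 0 ≤ t → HasDerivAt (fun s => φ s x) (f (φ t x)) t)
    (hlim : ∀ x ∈ Ω, Tendsto (fun t => φ t x) atTop (𝓝 0))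
    (hωcont : Continuous ω)
    (hωnn : ∀ x, 0 ≤ ω x)
    (hω0 : ω 0 = 0)
    (hωpos : ∀ x, x ≠ 0 → 0 < ω x)
    (hint : ∀ x ∈ Ω, IntegrableOn (fun t => ω (φ t x)) (Set.Ioi (0:ℝ)))
    (V : EuclideanSpace ℝ (Fin n) → ℝ)
    (hV : ∀ x, V x = ∫ t in Set.Ioi (0:ℝ), ω (φ t x))
    (hC1 : ∀ x ∈ Ω, HasFDerivAt Vhat (DVhat x) x)
    (hDVcont : ContinuousOn DVhat Ω)
    (hVhat0 : Vhat 0 = 0)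
    (hres : ∀ x ∈ Ω, DVhat x (f x) + ω x ≤ ε * ω x) :
    (∀ x ∈ Ω, (1 - ε) * V x ≤ Vhat x) ∧
    (∀ x ∈ Ω, DVhat x (f x) ≤ -((1 - ε) * ω x)) ∧
    (∀ x ∈ Ω, x ≠ 0 → 0 < Vhat x) :=
  lyapunov_onesided_certificate_general f φ Ω ω Vhat DVhat ε hε1 h0Ω hφ0 hinv hflow hlim hωcont hωnn
    hωpos hint V hV hC1 hVhat0 hres
end

section
/- If ω is positive definite and continuous, φ(t,x) is the flow of ẋ = f(x) converging to 0 for all x in Ω, and V(x) = ∫₀^∞ ω(φ(t,x)) dt is finite on Ω, then V is positive definite on Ω: V(0) = 0 and V(x) > 0 for all x ∈ Ω \ {0}. -/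
open MeasureTheory Filter Topology

/-- If `ω` is continuous and positive definite and the flow converges to `0` on `Ω`,
then `V x = ∫₀^∞ ω (φ t x) dt` is positive definite on `Ω`. -/
theorem value_function_positive_definite
    {n : ℕ}
    (f : EuclideanSpace ℝ (Fin n) → EuclideanSpace ℝ (Fin n))
    (φ : ℝ → EuclideanSpace ℝ (Fin n) → EuclideanSpace ℝ (Fin n))
    (Ω : Set (EuclideanSpace ℝ (Fin n)))
    (ω : EuclideanSpace ℝ (Fin n) → ℝ)
    (hf0 : f 0 = 0)
    (h0Ω : (0 : EuclideanSpace ℝ (Fin n)) ∈ Ω)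
    (hφ0 : ∀ x ∈ Ω, φ 0 x = x)
    (hφzero : ∀ t : ℝ, φ t 0 = 0)
    (hφcont : ∀ x ∈ Ω, Continuous (fun t => φ t x))
    (hlim : ∀ x ∈ Ω, Tendsto (fun t => φ t x) atTop (𝓝 0))
    (hωcont : Continuous ω)
    (hω0 : ω 0 = 0)
    (hωpos : ∀ x, x ≠ 0 → 0 < ω x)
    (hωnn : ∀ x, 0 ≤ ω x)
    (hint : ∀ x ∈ Ω, IntegrableOn (fun t => ω (φ t x)) (Set.Ioi (0:ℝ)))
    (V : EuclideanSpace ℝ (Fin n) → ℝ)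
    (hV : ∀ x, V x = ∫ t in Set.Ioi (0:ℝ), ω (φ t x)) :
    V 0 = 0 ∧ ∀ x ∈ Ω, x ≠ 0 → 0 < V x := by
  constructor
  · rw [hV]
    simp [hφzero, hω0]
  · intro x hx hx0
    rw [hV]
    have hcont : Continuous (fun t => ω (φ t x)) := hωcont.comp (hφcont x hx)
    -- the integrand is positive at t = 0
    have h0 : (fun t => ω (φ t x)) 0 > 0 := by
      simpa [hφ0 x hx] using hωpos x hx0
    -- hence positive on a neighborhood of 0
    obtain ⟨δ, hδ, hball⟩ := Metric.eventually_nhds_iff.mp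
      ((hcont.tendsto 0).eventually (eventually_gt_nhds h0))
    have hpos := (setIntegral_pos_iff_support_of_nonneg_ae
      (Filter.Eventually.of_forall (fun t => hωnn (φ t x)) :
        0 ≤ᵐ[volume.restrict (Set.Ioi (0:ℝ))] fun t => ω (φ t x))
      (hint x hx)).mpr
    apply hpos
    have hsub : Set.Ioo (0:ℝ) δ ⊆ Function.support (fun t => ω (φ t x)) ∩ Set.Ioi 0 := by
      intro t ht
      refine ⟨?_, ht.1⟩
      have : dist t (0:ℝ) < δ := by
        rw [Real.dist_eq, sub_zero, abs_of_pos ht.1]; exact ht.2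
      exact ne_of_gt (hball this)
    calc (0:ENNReal) < volume (Set.Ioo (0:ℝ) δ) := by simp [hδ]
      _ ≤ _ := measure_mono hsub
end

section
/- For the scalar system ẋ = −x with flow φ(t,x) = x e^{−t}, define r(x) = δ·log 2 / |log|x|| for x ≠ 0 and r(0) = 0, with fixed δ > 0. Then r is continuous on (−1/2, 1/2), satisfies |r(x)| ≤ δ on (−1/2, 1/2), but for every x ∈ (−1/2, 1/2) with x ≠ 0 the improper integral ∫₀^∞ r(φ(t,x)) dt diverges to +∞. -/
/-!
Along the trajectory `x e^{-t}` with `0 < |x| < 1` one has `|log |x e^{-t}|| = t + |log |x||`, so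
the residual becomes `δ log 2 / (t + |log |x||)`, which is not integrable at infinity. On `(-1/2, 1/2)`
the bound `|r| ≤ δ` comes from `|log |x|| ≥ log 2`, and continuity at `0` from `|log |x|| → ∞`.
-/

open MeasureTheory Set Filter Topology Real

theorem continuousAt_const_div_abs_log_abs (k : ℝ) {x : ℝ} (hx : |x| ≠ 1) :
    ContinuousAt (fun y => k / |log (|y|)|) x := by
  by_cases hx0 : x = 0
  · subst hx0
    rw [← continuousWithinAt_compl_self, ContinuousWithinAt]
    have hlog : Tendsto (fun y : ℝ => |log (|y|)|) (𝓝[≠] 0) atTop := by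
      simpa only [log_abs, Function.comp_def] using tendsto_abs_atBot_atTop.comp tendsto_log_nhdsNE_zero
    simpa using tendsto_const_nhds.div_atTop hlog
  · have hlog : |log (|x|)| ≠ 0 :=
      abs_ne_zero.2 (log_ne_zero_of_pos_of_ne_one (abs_pos.2 hx0) hx)
    exact continuousAt_const.div ((continuousAt_log (abs_ne_zero.2 hx0)).comp
      continuous_abs.continuousAt).abs hlog

theorem log_two_le_abs_log_abs {x : ℝ} (hx0 : x ≠ 0) (hx : |x| ≤ 1 / 2) :
    log 2 ≤ |log (|x|)| := by
  have : log |x| ≤ -log 2 := by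
    simpa only [one_div, log_inv] using log_le_log (abs_pos.2 hx0) hx
  exact le_abs.2 (Or.inr (by linarith))

theorem const_div_abs_log_abs_le {k x : ℝ} (hk : 0 ≤ k) (hx : |x| ≤ 1 / 2) :
    k / |log (|x|)| ≤ k / log 2 := by
  by_cases hx0 : x = 0
  · simp only [hx0, abs_zero, log_zero, div_zero]
    exact div_nonneg hk (log_pos one_lt_two).le
  · exact div_le_div_of_nonneg_left hk (log_pos one_lt_two) (log_two_le_abs_log_abs hx0 hx)

theorem abs_log_abs_mul_exp_neg {x t : ℝ} (hx0 : x ≠ 0) (hx : |x| ≤ 1) (ht : 0 ≤ t) :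
    |log (|x * exp (-t)|)| = t + |log (|x|)| := by
  have hlog : log |x| ≤ 0 := log_nonpos (abs_nonneg x) hx
  rw [abs_mul, abs_of_pos (exp_pos _), log_mul (abs_ne_zero.2 hx0) (exp_ne_zero _), log_exp,
    abs_of_nonpos (by linarith), abs_of_nonpos hlog]
  ring

theorem lintegral_ofReal_inv_Ioi_eq_top {a : ℝ} (ha : 0 ≤ a) :
    ∫⁻ t in Ioi a, ENNReal.ofReal t⁻¹ = ⊤ := by
  by_contra h
  refine not_integrableOn_Ioi_inv ((lintegral_ofReal_ne_top_iff_integrable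
    measurable_inv.aestronglyMeasurable ?_).1 h)
  exact ae_restrict_of_forall_mem measurableSet_Ioi fun t ht => inv_nonneg.2 (ha.trans ht.le)

theorem lintegral_ofReal_div_add_Ioi_eq_top {k c : ℝ} (hk : 0 < k) (hc : 0 ≤ c) :
    ∫⁻ t in Ioi 0, ENNReal.ofReal (k / (t + c)) = ⊤ := by
  have hcompare : ∀ t ∈ Ioi c,
      ENNReal.ofReal (k / 2) * ENNReal.ofReal t⁻¹ ≤ ENNReal.ofReal (k / (t + c)) := by
    intro t ht
    have ht0 : 0 < t := hc.trans_lt ht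
    rw [← ENNReal.ofReal_mul (by positivity), ← div_eq_mul_inv, div_div]
    exact ENNReal.ofReal_le_ofReal
      (div_le_div_of_nonneg_left hk.le (by positivity) (by linarith [mem_Ioi.1 ht]))
  refine top_unique ?_
  calc ⊤ = ENNReal.ofReal (k / 2) * ∫⁻ t in Ioi c, ENNReal.ofReal t⁻¹ := by
        rw [lintegral_ofReal_inv_Ioi_eq_top hc, ENNReal.mul_top (by simpa using hk)]
    _ = ∫⁻ t in Ioi c, ENNReal.ofReal (k / 2) * ENNReal.ofReal t⁻¹ :=
        (lintegral_const_mul _ measurable_inv.ennreal_ofReal).symm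
    _ ≤ ∫⁻ t in Ioi c, ENNReal.ofReal (k / (t + c)) := setLIntegral_mono' measurableSet_Ioi hcompare
    _ ≤ ∫⁻ t in Ioi 0, ENNReal.ofReal (k / (t + c)) := lintegral_mono_set (Ioi_subset_Ioi hc)

/-- A continuous residual with `r 0 = 0` and `|r| ≤ δ` on `(-1/2, 1/2)` whose
integral along every nontrivial trajectory of `ẋ = -x` diverges to `+∞`. -/
theorem bounded_residual_divergent_integral (δ : ℝ) (hδ : 0 < δ)
    (r : ℝ → ℝ)
    (hr : ∀ x : ℝ, r x = if x = 0 then 0 else δ * Real.log 2 / abs (Real.log (abs x))) :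
    ContinuousOn r (Set.Ioo (-(1/2) : ℝ) (1/2)) ∧
    (∀ x ∈ Set.Ioo (-(1/2) : ℝ) (1/2), |r x| ≤ δ) ∧
    (∀ x ∈ Set.Ioo (-(1/2) : ℝ) (1/2), x ≠ 0 →
      ∫⁻ t in Set.Ioi (0:ℝ), ENNReal.ofReal (r (x * Real.exp (-t))) = ⊤) := by
  -- `log 0 = 0` and `a / 0 = 0` make the case split in `hr` redundant
  have hr' : r = fun x => δ * log 2 / |log (|x|)| :=
    funext fun x => by rw [hr]; split_ifs with hx <;> simp [hx]
  have hk : 0 < δ * log 2 := mul_pos hδ (log_pos one_lt_two)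
  have habs : ∀ x ∈ Ioo (-(1/2) : ℝ) (1/2), |x| ≤ 1 / 2 := fun x hx => (abs_lt.2 hx).le
  subst hr'
  refine ⟨fun x hx => ?_, fun x hx => ?_, fun x hx hx0 => ?_⟩
  · exact (continuousAt_const_div_abs_log_abs _ (by linarith [habs x hx] : |x| < 1).ne).continuousWithinAt
  · rw [abs_of_nonneg (by positivity)]
    exact (const_div_abs_log_abs_le hk.le (habs x hx)).trans_eq
      (mul_div_cancel_right₀ δ (log_pos one_lt_two).ne')
  · have htraj : ∀ t ∈ Ioi (0 : ℝ),
        δ * log 2 / |log (|x * exp (-t)|)| = δ * log 2 / (t + |log (|x|)|) := fun t ht => by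
      rw [abs_log_abs_mul_exp_neg hx0 (by linarith [habs x hx]) (le_of_lt ht)]
    rw [setLIntegral_congr_fun measurableSet_Ioi fun t ht => congrArg ENNReal.ofReal (htraj t ht)]
    exact lintegral_ofReal_div_add_Ioi_eq_top hk (abs_nonneg _)
end

section
/- In the setting of the HJB theorem, if the residual satisfies r(x) ≤ εQ(x) on Ω_c with ε ∈ [0,1), V̂(0)=0, and the closed-loop trajectory φ(t) = φ(t,x,û) under the feedback û converges to 0 with V̂(φ(t)) → 0, then V̂(x) ≥ (1−ε)·J(x,û) ≥ (1−ε)·V*(x), where J(x,û) = ∫₀^∞ (Q(φ(t)) + û(φ(t))ᵀR(φ(t))û(φ(t))) dt and V*(x) = inf over admissible u of J(x,u). -/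
open Matrix MeasureTheory Filter Topology

/-!
Along the closed loop, the residual bound `r ≤ ε Q` says exactly that `V̂ ∘ φ` decreases at
rate at least `(1 - ε)` times the running cost, since for the feedback `û` the Hamiltonian
splits as `DV̂ ⬝ f - ½ ‖gᵀDV̂‖²_{R⁻¹}` while `ûᵀRû = ¼ ‖gᵀDV̂‖²_{R⁻¹} ≥ 0`. Integrating over
`[0, T]` and letting `T → ∞` with `V̂(φ T) → 0` gives `(1 - ε) J ≤ V̂ x`; the second bound is
just `V* ≤ J`.
-/

theorem integral_Ioi_le_sub_of_hasDerivAt_le_neg {F F' ψ : ℝ → ℝ} {a L : ℝ}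
    (hF : ∀ t, a ≤ t → HasDerivAt F (F' t) t) (hle : ∀ t, a ≤ t → F' t ≤ -ψ t)
    (hψ : IntegrableOn ψ (Set.Ioi a)) (hlim : Tendsto F atTop (𝓝 L)) :
    ∫ t in Set.Ioi a, ψ t ≤ F a - L := by
  have hfinite : ∀ T, a ≤ T → ∫ t in a..T, ψ t ≤ F a - F T := by
    intro T hT
    have hcont : ContinuousOn F (Set.Icc a T) := fun t ht =>
      (hF t ht.1).continuousAt.continuousWithinAt
    have hneg : IntegrableOn (fun t => -ψ t) (Set.Icc a T) :=
      ((integrableOn_Icc_iff_integrableOn_Ioc).mpr (hψ.mono_set Set.Ioc_subset_Ioi_self)).neg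
    have := intervalIntegral.sub_le_integral_of_hasDeriv_right_of_le hT hcont
      (fun t ht => (hF t ht.1.le).hasDerivWithinAt) hneg (fun t ht => hle t ht.1.le)
    rw [intervalIntegral.integral_neg] at this
    linarith
  refine le_of_tendsto_of_tendsto (intervalIntegral_tendsto_integral_Ioi a hψ tendsto_id)
    (tendsto_const_nhds.sub hlim) ?_
  filter_upwards [eventually_ge_atTop a] with T hT using hfinite T hT

section Feedback

variable {l m : Type*} [Fintype l] [Fintype m] [DecidableEq l]

theorem Matrix.PosDef.dotProduct_inv_mulVec_nonneg {R : Matrix l l ℝ} (hR : R.PosDef)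
    (w : l → ℝ) : 0 ≤ w ⬝ᵥ (R⁻¹ *ᵥ w) := by
  simpa using hR.inv.posSemidef.dotProduct_mulVec_nonneg w

theorem neg_smul_inv_mulVec_dotProduct {R : Matrix l l ℝ} (hR : IsUnit R.det) (c : ℝ) (w : l → ℝ) :
    -(c • (R⁻¹ *ᵥ w)) ⬝ᵥ (R *ᵥ -(c • (R⁻¹ *ᵥ w))) = c ^ 2 * (w ⬝ᵥ (R⁻¹ *ᵥ w)) := by
  rw [mulVec_neg, mulVec_smul, mulVec_mulVec, mul_nonsing_inv _ hR, one_mulVec, neg_dotProduct_neg,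
    smul_dotProduct, dotProduct_smul, dotProduct_comm, smul_eq_mul, smul_eq_mul]
  ring

theorem dotProduct_feedback_le_of_residual_le {R : Matrix l l ℝ} (hR : R.PosDef)
    (B : Matrix m l ℝ) (p a : m → ℝ) {q ε : ℝ} (hε : 0 ≤ ε) {u : l → ℝ}
    (hu : u = -((1/2 : ℝ) • (R⁻¹ *ᵥ (Bᵀ *ᵥ p))))
    (hres : q + p ⬝ᵥ a - (1/4 : ℝ) * (p ⬝ᵥ (B *ᵥ (R⁻¹ *ᵥ (Bᵀ *ᵥ p)))) ≤ ε * q) :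
    p ⬝ᵥ (a + B *ᵥ u) ≤ -((1 - ε) * (q + u ⬝ᵥ (R *ᵥ u))) := by
  have htranspose : ∀ v, p ⬝ᵥ (B *ᵥ v) = (Bᵀ *ᵥ p) ⬝ᵥ v := fun v => by
    rw [← dotProduct_transpose_mulVec, dotProduct_comm]
  rw [htranspose] at hres
  have hcost : u ⬝ᵥ (R *ᵥ u) = (1/4 : ℝ) * ((Bᵀ *ᵥ p) ⬝ᵥ (R⁻¹ *ᵥ (Bᵀ *ᵥ p))) := by
    rw [hu, neg_smul_inv_mulVec_dotProduct (isUnit_iff_ne_zero.mpr hR.det_pos.ne')]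
    norm_num
  have hdrift : p ⬝ᵥ (B *ᵥ u) = -(1/2 : ℝ) * ((Bᵀ *ᵥ p) ⬝ᵥ (R⁻¹ *ᵥ (Bᵀ *ᵥ p))) := by
    rw [htranspose, hu, dotProduct_neg, dotProduct_smul, smul_eq_mul, neg_mul]
  have hnonneg := hR.dotProduct_inv_mulVec_nonneg (Bᵀ *ᵥ p)
  rw [dotProduct_add, hdrift, hcost]
  linarith [mul_nonneg hε hnonneg]

end Feedback

theorem hjb_lower_value_bound_general
    {n k : ℕ}
    (f : (Fin n → ℝ) → (Fin n → ℝ))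
    (g : (Fin n → ℝ) → Matrix (Fin n) (Fin k) ℝ)
    (Q : (Fin n → ℝ) → ℝ)
    (R : (Fin n → ℝ) → Matrix (Fin k) (Fin k) ℝ)
    (Vhat : (Fin n → ℝ) → ℝ)
    (DV : (Fin n → ℝ) → (Fin n → ℝ))
    (uhat : (Fin n → ℝ) → (Fin k → ℝ))
    (huhat : ∀ y, uhat y = -((1/2 : ℝ) • ((R y)⁻¹ *ᵥ ((g y)ᵀ *ᵥ DV y))))
    (Ωc : Set (Fin n → ℝ))
    (ε : ℝ) (hε0 : 0 ≤ ε) (hε1 : ε < 1)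
    (hR : ∀ y, (R y).PosDef)
    (hres : ∀ y ∈ Ωc,
      Q y + DV y ⬝ᵥ f y -
        (1/4 : ℝ) * (DV y ⬝ᵥ (g y *ᵥ ((R y)⁻¹ *ᵥ ((g y)ᵀ *ᵥ DV y)))) ≤ ε * Q y)
    (x : Fin n → ℝ)
    (φ : ℝ → (Fin n → ℝ)) (hφ0 : φ 0 = x)
    (hφΩ : ∀ t : ℝ, 0 ≤ t → φ t ∈ Ωc)
    (hchain : ∀ t : ℝ, 0 ≤ t → HasDerivAt (fun s => Vhat (φ s))
      (DV (φ t) ⬝ᵥ (f (φ t) + g (φ t) *ᵥ uhat (φ t))) t)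
    (hVlim : Tendsto (fun T => Vhat (φ T)) atTop (𝓝 0))
    (hint : IntegrableOn
      (fun t => Q (φ t) + uhat (φ t) ⬝ᵥ (R (φ t) *ᵥ uhat (φ t))) (Set.Ioi (0:ℝ)))
    (J : ℝ)
    (hJ : J = ∫ t in Set.Ioi (0:ℝ),
      (Q (φ t) + uhat (φ t) ⬝ᵥ (R (φ t) *ᵥ uhat (φ t))))
    (costs : Set ℝ) (hJmem : J ∈ costs) (hbdd : BddBelow costs)
    (Vstar : ℝ) (hVstar : Vstar = sInf costs) :
    (1 - ε) * J ≤ Vhat x ∧ (1 - ε) * Vstar ≤ (1 - ε) * J := by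
  have hdecrease : ∀ t, 0 ≤ t → DV (φ t) ⬝ᵥ (f (φ t) + g (φ t) *ᵥ uhat (φ t)) ≤
      -((1 - ε) * (Q (φ t) + uhat (φ t) ⬝ᵥ (R (φ t) *ᵥ uhat (φ t)))) := fun t ht =>
    dotProduct_feedback_le_of_residual_le (hR _) _ _ _ hε0 (huhat _) (hres _ (hφΩ t ht))
  have hvalue := integral_Ioi_le_sub_of_hasDerivAt_le_neg hchain hdecrease (hint.const_mul _) hVlim
  rw [integral_const_mul, ← hJ, hφ0, sub_zero] at hvalue
  exact ⟨hvalue, mul_le_mul_of_nonneg_left (hVstar ▸ csInf_le hbdd hJmem) (by linarith)⟩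

/-- Lower value bound from a one-sided HJB residual bound: if `r ≤ ε Q` on `Ω_c`
and the closed-loop trajectory under `û` converges with `V̂(φ(t)) → 0`, then
`V̂ x ≥ (1-ε) J(x,û) ≥ (1-ε) V*(x)`. -/
theorem hjb_lower_value_bound
    {n k : ℕ}
    (f : (Fin n → ℝ) → (Fin n → ℝ))
    (g : (Fin n → ℝ) → Matrix (Fin n) (Fin k) ℝ)
    (Q : (Fin n → ℝ) → ℝ)
    (R : (Fin n → ℝ) → Matrix (Fin k) (Fin k) ℝ)
    (Vhat : (Fin n → ℝ) → ℝ)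
    (DV : (Fin n → ℝ) → (Fin n → ℝ))
    (uhat : (Fin n → ℝ) → (Fin k → ℝ))
    (huhat : ∀ y, uhat y = -((1/2 : ℝ) • ((R y)⁻¹ *ᵥ ((g y)ᵀ *ᵥ DV y))))
    (Ωc : Set (Fin n → ℝ))
    (ε : ℝ) (hε0 : 0 ≤ ε) (hε1 : ε < 1)
    (hQ : ∀ y, 0 ≤ Q y)
    (hR : ∀ y, (R y).PosDef)
    (hres : ∀ y ∈ Ωc,
      Q y + DV y ⬝ᵥ f y -
        (1/4 : ℝ) * (DV y ⬝ᵥ (g y *ᵥ ((R y)⁻¹ *ᵥ ((g y)ᵀ *ᵥ DV y)))) ≤ ε * Q y)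
    (x : Fin n → ℝ) (hx : x ∈ Ωc)
    (φ : ℝ → (Fin n → ℝ)) (hφ0 : φ 0 = x)
    (hφΩ : ∀ t : ℝ, 0 ≤ t → φ t ∈ Ωc)
    (hchain : ∀ t : ℝ, 0 ≤ t → HasDerivAt (fun s => Vhat (φ s))
      (DV (φ t) ⬝ᵥ (f (φ t) + g (φ t) *ᵥ uhat (φ t))) t)
    (hVlim : Tendsto (fun T => Vhat (φ T)) atTop (𝓝 0))
    (hint : IntegrableOn
      (fun t => Q (φ t) + uhat (φ t) ⬝ᵥ (R (φ t) *ᵥ uhat (φ t))) (Set.Ioi (0:ℝ)))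
    (J : ℝ)
    (hJ : J = ∫ t in Set.Ioi (0:ℝ),
      (Q (φ t) + uhat (φ t) ⬝ᵥ (R (φ t) *ᵥ uhat (φ t))))
    (costs : Set ℝ) (hJmem : J ∈ costs) (hbdd : BddBelow costs)
    (Vstar : ℝ) (hVstar : Vstar = sInf costs) :
    (1 - ε) * J ≤ Vhat x ∧ (1 - ε) * Vstar ≤ (1 - ε) * J :=
  hjb_lower_value_bound_general f g Q R Vhat DV uhat huhat Ωc ε hε0 hε1 hR hres x φ hφ0 hφΩ hchain
    hVlim hint J hJ costs hJmem hbdd Vstar hVstar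
end

section
/- In the setting of the HJB theorem, if the residual satisfies r(x) ≥ −εQ(x) on Ω_c, V̂(0)=0, and for every admissible control u the trajectory φ(t,x,u) from x ∈ Ω_c converges to 0, then V̂(x) ≤ (1+ε)·V*(x) for all x ∈ Ω_c, where V*(x) = inf over admissible u of J(x,u). (Uses a last-exit-time argument: after time τ_x = sup{t : V̂(φ(t)) > V̂(x)} the trajectory remains in the sublevel set {V̂ ≤ V̂(x)} ⊆ Ω_c, V̂(φ(τ_x)) = V̂(x), and d/dt V̂(φ(t)) ≥ −(1+ε)(Q + uᵀRu) there.) -/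
/-!
Along an admissible trajectory the residual bound gives, by completing the square in the
control, `d/dt V̂(φ t) ≥ -(1 + ε)(Q + uᵀRu)` as long as `φ t` stays in `Ω_c`. Since `V̂ ∘ φ`
tends to `0`, after the last time `τ` at which `V̂(φ τ) ≥ V̂(x)` the trajectory stays in
`{V̂ < V̂ x} ∩ Ω ⊆ Ω_c`; integrating the derivative bound over `(τ, ∞)` yields
`V̂ x ≤ V̂(φ τ) ≤ (1 + ε) J(x, u)` for every admissible `u`, hence for the infimum.
-/

open Matrix MeasureTheory Filter Topology Set

namespace Matrix

variable {ι κ : Type*} [Fintype ι] [Fintype κ] [DecidableEq κ]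

/-- Completing the square: `(v + R⁻¹a/2)ᵀ R (v + R⁻¹a/2) ≥ 0`. -/
theorem PosDef.neg_dotProduct_le {R : Matrix κ κ ℝ} (hR : R.PosDef) (a v : κ → ℝ) :
    -(a ⬝ᵥ v) ≤ v ⬝ᵥ (R *ᵥ v) + 1 / 4 * (a ⬝ᵥ (R⁻¹ *ᵥ a)) := by
  set b := R⁻¹ *ᵥ a
  have hRb : R *ᵥ b = a := by
    rw [mulVec_mulVec, mul_nonsing_inv _ hR.det_pos.ne'.isUnit, one_mulVec]
  have hbR : b ᵥ* R = a := by
    rw [← mulVec_transpose, ← conjTranspose_eq_transpose_of_trivial, hR.1.eq, hRb]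
  have hsq := hR.posSemidef.dotProduct_mulVec_nonneg (v + (1 / 2 : ℝ) • b)
  simp only [star_trivial, mulVec_add, mulVec_smul, hRb, dotProduct_add, add_dotProduct,
    dotProduct_smul, smul_dotProduct, smul_eq_mul] at hsq
  rw [dotProduct_mulVec b, hbR, dotProduct_comm v a, dotProduct_comm b a] at hsq
  linarith

theorem neg_dotProduct_le_of_residual_ge {ε q : ℝ} (hε : 0 ≤ ε) {R : Matrix κ κ ℝ}
    (hR : R.PosDef) {p F : ι → ℝ} {G : Matrix ι κ ℝ}
    (hres : -(ε * q) ≤ q + p ⬝ᵥ F - 1 / 4 * (p ⬝ᵥ (G *ᵥ (R⁻¹ *ᵥ (Gᵀ *ᵥ p))))) (w : κ → ℝ) :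
    -(p ⬝ᵥ (F + G *ᵥ w)) ≤ (1 + ε) * (q + w ⬝ᵥ (R *ᵥ w)) := by
  have hG : ∀ z, p ⬝ᵥ (G *ᵥ z) = (Gᵀ *ᵥ p) ⬝ᵥ z := fun z => by
    rw [dotProduct_mulVec, mulVec_transpose]
  rw [hG] at hres
  rw [dotProduct_add, hG]
  have hsq := hR.neg_dotProduct_le (Gᵀ *ᵥ p) w
  have hwRw : 0 ≤ w ⬝ᵥ (R *ᵥ w) := by
    simpa using hR.posSemidef.dotProduct_mulVec_nonneg w
  nlinarith [mul_nonneg hε hwRw]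

end Matrix

theorem exists_last_time_le_of_tendsto {φ : ℝ → ℝ} {a v L : ℝ} (hφ : ContinuousOn φ (Ici a))
    (ha : v ≤ φ a) (hlim : Tendsto φ atTop (𝓝 L)) (hL : L < v) :
    ∃ τ, a ≤ τ ∧ v ≤ φ τ ∧ ∀ t, τ < t → φ t < v := by
  set S := Ici a ∩ φ ⁻¹' Ici v
  have hS : IsClosed S := hφ.preimage_isClosed_of_isClosed isClosed_Ici isClosed_Ici
  have hSbdd : BddAbove S := by
    obtain ⟨M, hM⟩ := eventually_atTop.1 (hlim.eventually_lt_const hL)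
    exact ⟨M, fun t ht => le_of_not_gt fun htM => (hM t htM.le).not_ge ht.2⟩
  have hτ : sSup S ∈ S := hS.csSup_mem ⟨a, self_mem_Ici, ha⟩ hSbdd
  refine ⟨sSup S, hτ.1, hτ.2, fun t ht => lt_of_not_ge fun hvt => ?_⟩
  exact ht.not_ge (le_csSup hSbdd ⟨hτ.1.trans ht.le, hvt⟩)

theorem sub_limit_le_integral_Ioi_of_hasDerivAt {φ φ' h : ℝ → ℝ} {τ L : ℝ}
    (hderiv : ∀ t ≥ τ, HasDerivAt φ (φ' t) t) (hbound : ∀ t > τ, -φ' t ≤ h t)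
    (hh : IntegrableOn h (Ioi τ)) (hlim : Tendsto φ atTop (𝓝 L)) :
    φ τ - L ≤ ∫ t in Ioi τ, h t := by
  have hstep : ∀ T ≥ τ, φ τ - φ T ≤ ∫ t in τ..T, h t := fun T hT => by
    have := intervalIntegral.sub_le_integral_of_hasDeriv_right_of_le hT
      (fun t ht => (hderiv t ht.1).continuousAt.neg.continuousWithinAt)
      (fun t ht => (hderiv t ht.1.le).neg.hasDerivWithinAt)
      ((integrableOn_Icc_iff_integrableOn_Ioc).2 (hh.mono_set Ioc_subset_Ioi_self))
      (fun t ht => hbound t ht.1)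
    simp only [Pi.neg_apply] at this
    linarith
  exact le_of_tendsto_of_tendsto (tendsto_const_nhds.sub hlim)
    (intervalIntegral_tendsto_integral_Ioi τ hh tendsto_id) (eventually_atTop.2 ⟨τ, hstep⟩)

theorem sub_limit_le_integral_Ioi_of_hasDerivAt_of_lt_initial {φ φ' h : ℝ → ℝ} {a L : ℝ}
    (hderiv : ∀ t ≥ a, HasDerivAt φ (φ' t) t) (hbound : ∀ t ≥ a, φ t < φ a → -φ' t ≤ h t)
    (hh : ∀ t > a, 0 ≤ h t) (hint : IntegrableOn h (Ioi a)) (hlim : Tendsto φ atTop (𝓝 L)) :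
    φ a - L ≤ ∫ t in Ioi a, h t := by
  have hint_nonneg : 0 ≤ ∫ t in Ioi a, h t := setIntegral_nonneg measurableSet_Ioi hh
  by_cases hφa : φ a ≤ L
  · linarith
  obtain ⟨τ, haτ, hτ, hafter⟩ := exists_last_time_le_of_tendsto
    (fun t ht => (hderiv t ht).continuousAt.continuousWithinAt) le_rfl hlim (not_le.1 hφa)
  have hIoi : Ioi τ ⊆ Ioi a := Ioi_subset_Ioi haτ
  calc φ a - L ≤ φ τ - L := by linarith
    _ ≤ ∫ t in Ioi τ, h t :=
      sub_limit_le_integral_Ioi_of_hasDerivAt (fun t ht => hderiv t (haτ.trans ht))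
        (fun t ht => hbound t (haτ.trans ht.le) (hafter t ht)) (hint.mono_set hIoi) hlim
    _ ≤ ∫ t in Ioi a, h t :=
      setIntegral_mono_set hint (ae_restrict_of_forall_mem measurableSet_Ioi hh)
        (Eventually.of_forall hIoi)

theorem hjb_upper_value_bound_general
    {n k : ℕ}
    (f : (Fin n → ℝ) → (Fin n → ℝ))
    (g : (Fin n → ℝ) → Matrix (Fin n) (Fin k) ℝ)
    (Q : (Fin n → ℝ) → ℝ)
    (R : (Fin n → ℝ) → Matrix (Fin k) (Fin k) ℝ)
    (Vhat : (Fin n → ℝ) → ℝ)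
    (DV : (Fin n → ℝ) → (Fin n → ℝ))
    (Ω : Set (Fin n → ℝ)) (c : ℝ)
    (ε : ℝ) (hε0 : 0 ≤ ε)
    (hQ : ∀ y, 0 ≤ Q y)
    (hR : ∀ y, (R y).PosDef)
    (hres : ∀ y ∈ Ω, Vhat y ≤ c →
      -(ε * Q y) ≤ Q y + DV y ⬝ᵥ f y -
        (1/4 : ℝ) * (DV y ⬝ᵥ (g y *ᵥ ((R y)⁻¹ *ᵥ ((g y)ᵀ *ᵥ DV y)))))
    (x : Fin n → ℝ) (hxc : Vhat x ≤ c)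
    (U : Set (ℝ → (Fin k → ℝ))) (hUne : U.Nonempty)
    (traj : (ℝ → (Fin k → ℝ)) → ℝ → (Fin n → ℝ))
    (htraj0 : ∀ u ∈ U, traj u 0 = x)
    (htrajΩ : ∀ u ∈ U, ∀ t : ℝ, 0 ≤ t → traj u t ∈ Ω)
    (hchain : ∀ u ∈ U, ∀ t : ℝ, 0 ≤ t →
      HasDerivAt (fun s => Vhat (traj u s))
        (DV (traj u t) ⬝ᵥ (f (traj u t) + g (traj u t) *ᵥ u t)) t)
    (hVlim : ∀ u ∈ U, Tendsto (fun T => Vhat (traj u T)) atTop (𝓝 0))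
    (hint : ∀ u ∈ U, IntegrableOn
      (fun t => Q (traj u t) + u t ⬝ᵥ (R (traj u t) *ᵥ u t)) (Set.Ioi (0:ℝ)))
    (Jc : (ℝ → (Fin k → ℝ)) → ℝ)
    (hJc : ∀ u ∈ U, Jc u = ∫ t in Set.Ioi (0:ℝ),
      (Q (traj u t) + u t ⬝ᵥ (R (traj u t) *ᵥ u t)))
    (Vstar : ℝ) (hVstar : Vstar = sInf (Jc '' U)) :
    Vhat x ≤ (1 + ε) * Vstar := by
  have h1ε : 0 < 1 + ε := by linarith
  have hcost : ∀ u ∈ U, Vhat x ≤ (1 + ε) * Jc u := by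
    intro u hu
    have hrun : ∀ t, 0 ≤ Q (traj u t) + u t ⬝ᵥ (R (traj u t) *ᵥ u t) := fun t =>
      add_nonneg (hQ _) (by simpa using (hR _).posSemidef.dotProduct_mulVec_nonneg (u t))
    have hdecay := sub_limit_le_integral_Ioi_of_hasDerivAt_of_lt_initial (hchain u hu)
      (fun t ht hlt => neg_dotProduct_le_of_residual_ge hε0 (hR _)
        (hres _ (htrajΩ u hu t ht) (by rw [htraj0 u hu] at hlt; linarith)) (u t))
      (fun t _ => mul_nonneg h1ε.le (hrun t)) ((hint u hu).const_mul (1 + ε)) (hVlim u hu)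
    rwa [integral_const_mul, ← hJc u hu, htraj0 u hu, sub_zero] at hdecay
  rw [hVstar, ← div_le_iff₀' h1ε]
  exact le_csInf (hUne.image Jc) (forall_mem_image.2 fun u hu =>
    (div_le_iff₀' h1ε).2 (hcost u hu))

/-- Upper value bound from a one-sided HJB residual bound: if `r ≥ -ε Q` on
`Ω_c = {y ∈ Ω | V̂ y ≤ c}` and every admissible control drives the state from
`x ∈ Ω_c` to the origin, then `V̂ x ≤ (1+ε) V*(x)` where `V*` is the infimum of
the costs of admissible controls. -/
theorem hjb_upper_value_bound
    {n k : ℕ}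
    (f : (Fin n → ℝ) → (Fin n → ℝ))
    (g : (Fin n → ℝ) → Matrix (Fin n) (Fin k) ℝ)
    (Q : (Fin n → ℝ) → ℝ)
    (R : (Fin n → ℝ) → Matrix (Fin k) (Fin k) ℝ)
    (Vhat : (Fin n → ℝ) → ℝ)
    (DV : (Fin n → ℝ) → (Fin n → ℝ))
    (Ω : Set (Fin n → ℝ)) (c : ℝ)
    (ε : ℝ) (hε0 : 0 ≤ ε) (hε1 : ε < 1)
    (hQ : ∀ y, 0 ≤ Q y)
    (hR : ∀ y, (R y).PosDef)
    (hVhat0 : Vhat 0 = 0)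
    (hres : ∀ y ∈ Ω, Vhat y ≤ c →
      -(ε * Q y) ≤ Q y + DV y ⬝ᵥ f y -
        (1/4 : ℝ) * (DV y ⬝ᵥ (g y *ᵥ ((R y)⁻¹ *ᵥ ((g y)ᵀ *ᵥ DV y)))))
    (x : Fin n → ℝ) (hxΩ : x ∈ Ω) (hxc : Vhat x ≤ c)
    (U : Set (ℝ → (Fin k → ℝ))) (hUne : U.Nonempty)
    (traj : (ℝ → (Fin k → ℝ)) → ℝ → (Fin n → ℝ))
    (htraj0 : ∀ u ∈ U, traj u 0 = x)
    (htrajΩ : ∀ u ∈ U, ∀ t : ℝ, 0 ≤ t → traj u t ∈ Ω)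
    (hchain : ∀ u ∈ U, ∀ t : ℝ, 0 ≤ t →
      HasDerivAt (fun s => Vhat (traj u s))
        (DV (traj u t) ⬝ᵥ (f (traj u t) + g (traj u t) *ᵥ u t)) t)
    (hlim : ∀ u ∈ U, Tendsto (fun t => traj u t) atTop (𝓝 0))
    (hVlim : ∀ u ∈ U, Tendsto (fun T => Vhat (traj u T)) atTop (𝓝 0))
    (hint : ∀ u ∈ U, IntegrableOn
      (fun t => Q (traj u t) + u t ⬝ᵥ (R (traj u t) *ᵥ u t)) (Set.Ioi (0:ℝ)))
    (Jc : (ℝ → (Fin k → ℝ)) → ℝ)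
    (hJc : ∀ u ∈ U, Jc u = ∫ t in Set.Ioi (0:ℝ),
      (Q (traj u t) + u t ⬝ᵥ (R (traj u t) *ᵥ u t)))
    (hbdd : BddBelow (Jc '' U))
    (Vstar : ℝ) (hVstar : Vstar = sInf (Jc '' U)) :
    Vhat x ≤ (1 + ε) * Vstar :=
  hjb_upper_value_bound_general f g Q R Vhat DV Ω c ε hε0 hQ hR hres x hxc U hUne traj htraj0 htrajΩ
    hchain hVlim hint Jc hJc Vstar hVstar
end
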